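/- arXiv:1304.4336 — 2 statements merged into one kernel-verified Lean document; each statement's English description precedes it below -/
import Mathlib

section
/- Let g : ℝ → ℝ be continuous, 1-periodic with mean zero, and K ∈ C^{q+1}([0,1]) with K^{(r)}(0) = K^{(r)}(1) = 0 for r = 0,…,q. Then |∫₀¹ K(t) g(t/ε) dt| ≤ ε^{q+1} · ‖g^{[q+1]}‖_∞ · ∫₀¹ |K^{(q+1)}(t)| dt, where g^{[r]} denotes the r-fold mean-zero antiderivative of g. -/
/-!
Since `ε ^ (r + 1) * g^{[r+1]} (t / ε)` is an antiderivative of `ε ^ r * g^{[r]} (t / ε)`, each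
integration by parts moves one derivative onto `K` and gains a factor `ε`; the boundary terms vanish
because `K^{(r)}(0) = K^{(r)}(1) = 0` for `r ≤ q`. After `q + 1` steps
`∫₀¹ K(t) g(t/ε) dt = (-1)^(q+1) ε^(q+1) ∫₀¹ K^{(q+1)}(t) g^{[q+1]}(t/ε) dt`, which is bounded
by `ε^(q+1) ‖g^{[q+1]}‖_∞ ∫₀¹ |K^{(q+1)}|`.
-/

open intervalIntegral

section PrimitiveChain

variable {G : ℕ → ℝ → ℝ} {c : ℕ → ℝ}

lemma continuous_of_eq_primitive_sub (h0 : Continuous (G 0))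
    (hsucc : ∀ r s, G (r + 1) s = (∫ τ in (0:ℝ)..s, G r τ) - c r) (r : ℕ) :
    Continuous (G r) := by
  induction r with
  | zero => exact h0
  | succ r ih =>
    rw [funext (hsucc r)]
    exact (continuous_primitive (fun a b => ih.intervalIntegrable a b) 0).sub continuous_const

lemma hasDerivAt_of_eq_primitive_sub (h0 : Continuous (G 0))
    (hsucc : ∀ r s, G (r + 1) s = (∫ τ in (0:ℝ)..s, G r τ) - c r) (r : ℕ) (s : ℝ) :
    HasDerivAt (G (r + 1)) (G r s) s := by
  rw [funext (hsucc r)]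
  exact ((continuous_of_eq_primitive_sub h0 hsucc r).integral_hasStrictDerivAt 0 s).hasDerivAt
    |>.sub_const _

end PrimitiveChain

lemma hasDerivAt_mul_comp_div {F : ℝ → ℝ} {f' ε t : ℝ} (hF : HasDerivAt F f' (t / ε))
    (hε : ε ≠ 0) : HasDerivAt (fun t => ε * F (t / ε)) f' t :=
  ((hF.comp t ((hasDerivAt_id t).div_const ε)).const_mul ε).congr_deriv (by field_simp)

lemma ContDiff.hasDerivAt_iteratedDeriv {n : ℕ} {K : ℝ → ℝ} (hK : ContDiff ℝ (n + 1) K)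
    (t : ℝ) : HasDerivAt (iteratedDeriv n K) (iteratedDeriv (n + 1) K t) t := by
  rw [iteratedDeriv_succ]
  exact (hK.differentiable_iteratedDeriv' n t).hasDerivAt

lemma integral_mul_deriv_eq_neg_of_eq_zero {a b : ℝ} {u u' v v' : ℝ → ℝ}
    (hu : ∀ t ∈ Set.uIcc a b, HasDerivAt u (u' t) t)
    (hv : ∀ t ∈ Set.uIcc a b, HasDerivAt v (v' t) t)
    (hu' : IntervalIntegrable u' MeasureTheory.volume a b)
    (hv' : IntervalIntegrable v' MeasureTheory.volume a b) (ha : v a = 0) (hb : v b = 0) :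
    ∫ t in a..b, v t * u' t = -∫ t in a..b, v' t * u t := by
  rw [integral_mul_deriv_eq_deriv_mul hv hu hv' hu', ha, hb]
  ring

theorem integral_mul_eq_neg_one_pow_mul_integral_iteratedDeriv_mul {a b : ℝ} {q : ℕ}
    {K : ℝ → ℝ} {u : ℕ → ℝ → ℝ} (hK : ContDiff ℝ (q + 1) K)
    (hKa : ∀ r ≤ q, iteratedDeriv r K a = 0) (hKb : ∀ r ≤ q, iteratedDeriv r K b = 0)
    (hu : ∀ r, Continuous (u r)) (hu' : ∀ r t, HasDerivAt (u (r + 1)) (u r t) t) :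
    ∀ r ≤ q + 1, ∫ t in a..b, K t * u 0 t = (-1) ^ r * ∫ t in a..b, iteratedDeriv r K t * u r t
  | 0, _ => by simp
  | r + 1, hr => by
    have hKr : ContDiff ℝ (r + 1) K := hK.of_le (by exact_mod_cast hr)
    have hKr' : Continuous (iteratedDeriv (r + 1) K) :=
      hK.continuous_iteratedDeriv _ (by exact_mod_cast hr)
    rw [integral_mul_eq_neg_one_pow_mul_integral_iteratedDeriv_mul hK hKa hKb hu hu' r (by omega),
      integral_mul_deriv_eq_neg_of_eq_zero (fun t _ => hu' r t)
        (fun t _ => hKr.hasDerivAt_iteratedDeriv t) ((hu r).intervalIntegrable a b)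
        (hKr'.intervalIntegrable a b) (hKa r (by omega)) (hKb r (by omega)),
      pow_succ]
    ring

lemma abs_integral_mul_le_mul_integral_abs {a b C : ℝ} {f h : ℝ → ℝ} (hab : a ≤ b)
    (hf : IntervalIntegrable f MeasureTheory.volume a b) (hh : ∀ t, |h t| ≤ C) :
    |∫ t in a..b, f t * h t| ≤ C * ∫ t in a..b, |f t| := by
  rw [← integral_const_mul, ← Real.norm_eq_abs]
  refine norm_integral_le_of_norm_le hab (MeasureTheory.ae_of_all _ fun t _ => ?_)
    (hf.abs.const_mul C)
  rw [Real.norm_eq_abs, abs_mul, mul_comm C]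
  exact mul_le_mul_of_nonneg_left (hh t) (abs_nonneg _)

theorem higher_order_averaging_estimate_general (q : ℕ)
    (g : ℝ → ℝ) (hg : Continuous g)
    (G : ℕ → ℝ → ℝ) (hG0 : G 0 = g)
    (hGsucc : ∀ r s, G (r + 1) s =
      (∫ τ in (0:ℝ)..s, G r τ) - ∫ σ in (0:ℝ)..1, ∫ τ in (0:ℝ)..σ, G r τ)
    (K : ℝ → ℝ) (hK : ContDiff ℝ (q + 1) K)
    (hK0 : ∀ r ≤ q, iteratedDeriv r K 0 = 0)
    (hK1 : ∀ r ≤ q, iteratedDeriv r K 1 = 0)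
    (M : ℝ) (hM : ∀ s, |G (q + 1) s| ≤ M)
    (ε : ℝ) (hε : 0 < ε) :
    |∫ t in (0:ℝ)..1, K t * g (t / ε)| ≤
      ε ^ (q + 1) * M * ∫ t in (0:ℝ)..1, |iteratedDeriv (q + 1) K t| := by
  subst hG0
  let u : ℕ → ℝ → ℝ := fun r t => ε ^ r * G r (t / ε)
  have hu : ∀ r, Continuous (u r) := fun r =>
    continuous_const.mul ((continuous_of_eq_primitive_sub hg hGsucc r).comp
      (continuous_id.div_const ε))
  have hu' : ∀ r t, HasDerivAt (u (r + 1)) (u r t) t := by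
    intro r t
    have h := (hasDerivAt_mul_comp_div (hasDerivAt_of_eq_primitive_sub hg hGsucc r (t / ε))
      hε.ne').const_mul (ε ^ r)
    refine h.congr_of_eventuallyEq (.of_forall fun s => ?_)
    show ε ^ (r + 1) * G (r + 1) (s / ε) = ε ^ r * (ε * G (r + 1) (s / ε))
    ring
  have hbound : ∀ t, |u (q + 1) t| ≤ ε ^ (q + 1) * M := fun t => by
    rw [abs_mul, abs_of_pos (by positivity)]
    exact mul_le_mul_of_nonneg_left (hM _) (by positivity)
  have hparts := integral_mul_eq_neg_one_pow_mul_integral_iteratedDeriv_mul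
    hK hK0 hK1 hu hu' (q + 1) le_rfl
  calc |∫ t in (0:ℝ)..1, K t * G 0 (t / ε)|
      = |(-1) ^ (q + 1) * ∫ t in (0:ℝ)..1, iteratedDeriv (q + 1) K t * u (q + 1) t| := by
        rw [← hparts]
        simp [u]
    _ = |∫ t in (0:ℝ)..1, iteratedDeriv (q + 1) K t * u (q + 1) t| := by
        rw [abs_mul, abs_neg_one_pow, one_mul]
    _ ≤ ε ^ (q + 1) * M * ∫ t in (0:ℝ)..1, |iteratedDeriv (q + 1) K t| :=
        abs_integral_mul_le_mul_integral_abs zero_le_one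
          ((hK.continuous_iteratedDeriv _ le_rfl).intervalIntegrable 0 1) hbound

theorem higher_order_averaging_estimate (q : ℕ)
    (g : ℝ → ℝ) (hg : Continuous g)
    (hper : Function.Periodic g 1) (hmean : ∫ τ in (0:ℝ)..1, g τ = 0)
    (G : ℕ → ℝ → ℝ) (hG0 : G 0 = g)
    (hGsucc : ∀ r s, G (r + 1) s =
      (∫ τ in (0:ℝ)..s, G r τ) - ∫ σ in (0:ℝ)..1, ∫ τ in (0:ℝ)..σ, G r τ)
    (K : ℝ → ℝ) (hK : ContDiff ℝ (q + 1) K)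
    (hK0 : ∀ r ≤ q, iteratedDeriv r K 0 = 0)
    (hK1 : ∀ r ≤ q, iteratedDeriv r K 1 = 0)
    (M : ℝ) (hM : ∀ s, |G (q + 1) s| ≤ M)
    (ε : ℝ) (hε : 0 < ε) :
    |∫ t in (0:ℝ)..1, K t * g (t / ε)| ≤
      ε ^ (q + 1) * M * ∫ t in (0:ℝ)..1, |iteratedDeriv (q + 1) K t| :=
  higher_order_averaging_estimate_general q g hg G hG0 hGsucc K hK hK0 hK1 M hM ε hε
end

section
/- Consider the linear system x' = (1/ε)·A·x on ℝ⁴ where A is block diagonal with rotation blocks of frequencies a and b, and suppose a = 2b (resonance). Then along any solution, ξ₃ = x₁x₃² + 2x₂x₃x₄ − x₁x₄² is constant in time. -/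
/-!
With `z = x₁ + i x₂` and `w = x₃ + i x₄` the system reads `z' = -(i a / ε) z`, `w' = -(i b / ε) w`,
and `ξ₃ = Re (conj z * w ^ 2)`. Hence `conj z * w ^ 2` rotates with angular velocity `(a - 2 b) / ε`,
which vanishes exactly at the resonance `a = 2 b`, so `ξ₃` is conserved.
-/

def resonantInvariant (x₁ x₂ x₃ x₄ : ℝ) : ℝ :=
  x₁ * x₃ ^ 2 + 2 * x₂ * x₃ * x₄ - x₁ * x₄ ^ 2

theorem hasDerivAt_resonantInvariant {x₁ x₂ x₃ x₄ : ℝ → ℝ} {y₁ y₂ y₃ y₄ t : ℝ}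
    (h1 : HasDerivAt x₁ y₁ t) (h2 : HasDerivAt x₂ y₂ t)
    (h3 : HasDerivAt x₃ y₃ t) (h4 : HasDerivAt x₄ y₄ t) :
    HasDerivAt (fun s => resonantInvariant (x₁ s) (x₂ s) (x₃ s) (x₄ s))
      (y₁ * (x₃ t ^ 2 - x₄ t ^ 2) + 2 * y₂ * x₃ t * x₄ t
        + 2 * y₃ * (x₁ t * x₃ t + x₂ t * x₄ t) + 2 * y₄ * (x₂ t * x₃ t - x₁ t * x₄ t)) t := by
  refine (((h1.mul (h3.pow 2)).add (((h2.const_mul 2).mul h3).mul h4)).sub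
    (h1.mul (h4.pow 2))).congr_deriv ?_
  simp only [Pi.mul_apply, Pi.pow_apply, Nat.cast_ofNat]
  ring

theorem hasDerivAt_resonantInvariant_eq_zero_of_resonance {c ω t : ℝ} {x₁ x₂ x₃ x₄ : ℝ → ℝ}
    (h1 : HasDerivAt x₁ (c * (2 * ω * x₂ t)) t) (h2 : HasDerivAt x₂ (c * (-(2 * ω) * x₁ t)) t)
    (h3 : HasDerivAt x₃ (c * (ω * x₄ t)) t) (h4 : HasDerivAt x₄ (c * (-ω * x₃ t)) t) :
    HasDerivAt (fun s => resonantInvariant (x₁ s) (x₂ s) (x₃ s) (x₄ s)) 0 t := by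
  convert hasDerivAt_resonantInvariant h1 h2 h3 h4 using 1
  ring

theorem resonant_invariant_conserved_general (ε b : ℝ)
    (a : ℝ) (hab : a = 2 * b)
    (x₁ x₂ x₃ x₄ : ℝ → ℝ)
    (h1 : ∀ t, HasDerivAt x₁ ((1 / ε) * (a * x₂ t)) t)
    (h2 : ∀ t, HasDerivAt x₂ ((1 / ε) * (-a * x₁ t)) t)
    (h3 : ∀ t, HasDerivAt x₃ ((1 / ε) * (b * x₄ t)) t)
    (h4 : ∀ t, HasDerivAt x₄ ((1 / ε) * (-b * x₃ t)) t) :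
    ∀ t, x₁ t * x₃ t ^ 2 + 2 * x₂ t * x₃ t * x₄ t - x₁ t * x₄ t ^ 2 =
         x₁ 0 * x₃ 0 ^ 2 + 2 * x₂ 0 * x₃ 0 * x₄ 0 - x₁ 0 * x₄ 0 ^ 2 := by
  subst hab
  have hderiv (t : ℝ) :
      HasDerivAt (fun s => resonantInvariant (x₁ s) (x₂ s) (x₃ s) (x₄ s)) 0 t :=
    hasDerivAt_resonantInvariant_eq_zero_of_resonance (h1 t) (h2 t) (h3 t) (h4 t)
  exact fun t =>
    is_const_of_deriv_eq_zero (fun s => (hderiv s).differentiableAt) (fun s => (hderiv s).deriv) t 0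

theorem resonant_invariant_conserved (ε b : ℝ) (hε : 0 < ε)
    (a : ℝ) (hab : a = 2 * b)
    (x₁ x₂ x₃ x₄ : ℝ → ℝ)
    (h1 : ∀ t, HasDerivAt x₁ ((1 / ε) * (a * x₂ t)) t)
    (h2 : ∀ t, HasDerivAt x₂ ((1 / ε) * (-a * x₁ t)) t)
    (h3 : ∀ t, HasDerivAt x₃ ((1 / ε) * (b * x₄ t)) t)
    (h4 : ∀ t, HasDerivAt x₄ ((1 / ε) * (-b * x₃ t)) t) :
    ∀ t, x₁ t * x₃ t ^ 2 + 2 * x₂ t * x₃ t * x₄ t - x₁ t * x₄ t ^ 2 =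
         x₁ 0 * x₃ 0 ^ 2 + 2 * x₂ 0 * x₃ 0 * x₄ 0 - x₁ 0 * x₄ 0 ^ 2 :=
  resonant_invariant_conserved_general ε b a hab x₁ x₂ x₃ x₄ h1 h2 h3 h4
end
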